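/- For every natural number n ≥ 1, ∑_{j=1}^{n} H_{n+1−j}/j = 2·∑_{k=1}^{n} H_k/(k+1), where H_k is the k-th harmonic number and H_0 = 0. -/

import Mathlib

open Finset

noncomputable def H (n : ℕ) : ℝ := ∑ i ∈ Finset.Icc 1 n, (1:ℝ)/i
noncomputable def H2 (n : ℕ) : ℝ := ∑ i ∈ Finset.Icc 1 n, (1:ℝ)/(i:ℝ)^2

/-!
Write `S n` for the left-hand side. Splitting off the last term of `H (n + 2 - j)` gives
`S (n + 1) = S n + ∑_{i + j = n + 2} 1 / (i j)`, and by partial fractions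
`1 / (i j) = (1 / i + 1 / j) / (i + j)` this convolution equals `2 H (n + 1) / (n + 2)`,
which is exactly the increment of the right-hand side.
-/

lemma H_zero : H 0 = 0 := by simp [H]

lemma H_succ (k : ℕ) : H (k + 1) = H k + 1 / ((k : ℝ) + 1) := by
  rw [H, H, sum_Icc_succ_top (by omega)]
  push_cast
  rfl

lemma sum_Icc_one_reflect {M : Type*} [AddCommMonoid M] (f : ℕ → M) (m : ℕ) :
    ∑ j ∈ Icc 1 m, f (m + 1 - j) = ∑ j ∈ Icc 1 m, f j := by
  refine sum_nbij' (fun j ↦ m + 1 - j) (fun j ↦ m + 1 - j) ?_ ?_ ?_ ?_ (fun _ _ ↦ rfl) <;>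
    intro j hj <;> simp only [mem_Icc] at * <;> omega

lemma one_div_mul_sub_eq {m j : ℕ} (hj : j ∈ Icc 1 m) :
    1 / ((j : ℝ) * ((m + 1 - j : ℕ) : ℝ))
      = (1 / (j : ℝ) + 1 / ((m + 1 - j : ℕ) : ℝ)) / ((m : ℝ) + 1) := by
  obtain ⟨hj1, hjm⟩ := mem_Icc.mp hj
  have hcast : ((m + 1 - j : ℕ) : ℝ) = (m : ℝ) + 1 - j := by
    push_cast [Nat.cast_sub (by omega : j ≤ m + 1)]; ring
  have hj0 : (j : ℝ) ≠ 0 := by positivity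
  have hmj : (m : ℝ) + 1 - j ≠ 0 := by
    rw [← hcast]; exact_mod_cast (by omega : m + 1 - j ≠ 0)
  rw [hcast]
  field_simp
  ring

lemma sum_one_div_mul_sub (m : ℕ) :
    ∑ j ∈ Icc 1 m, 1 / ((j : ℝ) * ((m + 1 - j : ℕ) : ℝ)) = 2 * H m / ((m : ℝ) + 1) := by
  rw [sum_congr rfl fun j hj ↦ one_div_mul_sub_eq hj, ← sum_div, sum_add_distrib,
    sum_Icc_one_reflect (fun j ↦ 1 / (j : ℝ)), ← H]
  ring

lemma sum_H_sub_div_succ (n : ℕ) :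
    ∑ j ∈ Icc 1 (n + 1), H (n + 2 - j) / (j : ℝ)
      = ∑ j ∈ Icc 1 n, H (n + 1 - j) / (j : ℝ) + 2 * H (n + 1) / ((n : ℝ) + 2) := by
  have hsplit : ∀ j ∈ Icc 1 (n + 1), H (n + 2 - j) / (j : ℝ)
      = H (n + 1 - j) / (j : ℝ) + 1 / ((j : ℝ) * ((n + 2 - j : ℕ) : ℝ)) := by
    intro j hj
    obtain ⟨-, hjn⟩ := mem_Icc.mp hj
    rw [show n + 2 - j = (n + 1 - j) + 1 by omega, H_succ, add_div, div_div, Nat.cast_succ,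
      mul_comm (j : ℝ)]
  rw [sum_congr rfl hsplit, sum_add_distrib, sum_Icc_succ_top (by omega : 1 ≤ n + 1),
    Nat.sub_self, H_zero, zero_div, add_zero, sum_one_div_mul_sub]
  push_cast
  ring

theorem stmt4_general (n : ℕ) :
    ∑ j ∈ Icc 1 n, H (n+1-j)/(j:ℝ) = 2 * ∑ k ∈ Icc 1 n, H k/((k:ℝ)+1) := by
  induction n with
  | zero => simp
  | succ n ih =>
    rw [sum_H_sub_div_succ, ih, sum_Icc_succ_top (by omega : 1 ≤ n + 1)]
    push_cast
    ring

theorem stmt4 (n : ℕ) (hn : 1 ≤ n) :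
    ∑ j ∈ Icc 1 n, H (n+1-j)/(j:ℝ) = 2 * ∑ k ∈ Icc 1 n, H k/((k:ℝ)+1) :=
  stmt4_general n
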